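/- Let s be a rational number and let r > 0 be a real number with r^2 rational. Then I_s(r) ≠ 0 and r · I_{s+1}(r) / I_s(r) is irrational. -/

import Mathlib

/-!
Write `I_ν(r) = (r/2)^ν G_ν(t)` with `t = (r/2)^2 ∈ ℚ` and `G_ν(t) = ∑ t^k / (k! Γ(ν+k+1))`.
These satisfy the three-term recurrence `G_ν = (ν+1) G_{ν+1} + t G_{ν+2}`. If `G_s` and
`G_{s+1}` were integer multiples `a h`, `b h` of one real `h`, the recurrence would make every
`M^n G_{s+n}`, `M = num(t) den(s)`, an integer multiple `z_n h`. For large `n` the `G_{s+n}`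
are positive, so `z_n ≠ 0` and `|h| ≤ |M|^n G_{s+n} ≤ |M|^n e^t / Γ(s+n+1) → 0`; hence `h = 0`,
contradicting positivity. A rational ratio `G_{s+1} / G_s = p/d` would make both multiples of
`G_s / d`.
-/

/-- The modified Bessel function of the first kind of order `ν`, for `r > 0`:
`I_ν(r) = ∑_{k=0}^∞ (1 / (k! Γ(ν+k+1))) (r/2)^(ν+2k)`. -/
noncomputable def besselI (ν r : ℝ) : ℝ :=
  ∑' k : ℕ, (1 / (k.factorial * Real.Gamma (ν + k + 1))) *
    (r / 2) ^ (ν + 2 * (k : ℝ))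

open Real Filter Topology Nat

theorem Real.inv_Gamma_eq_self_mul_inv_Gamma_add_one (x : ℝ) :
    (Gamma x)⁻¹ = x * (Gamma (x + 1))⁻¹ := by
  rcases ne_or_eq x 0 with hx | rfl
  · rw [Gamma_add_one hx, mul_inv, mul_inv_cancel_left₀ hx]
  · rw [zero_add, Gamma_zero, inv_zero, zero_mul]

theorem Real.factorial_mul_Gamma_le_Gamma_add_nat {x : ℝ} (hx : 0 ≤ x) (k : ℕ) :
    k ! * Gamma (x + 1) ≤ Gamma (x + k + 1) := by
  induction k with
  | zero => simp
  | succ k ih =>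
    have hpos : 0 < x + k + 1 := by positivity
    calc ((k + 1) ! : ℝ) * Gamma (x + 1) = (k + 1) * (k ! * Gamma (x + 1)) := by
          push_cast [factorial_succ]; ring
      _ ≤ (x + k + 1) * Gamma (x + k + 1) := by
          gcongr
          linarith
      _ = Gamma (x + ↑(k + 1) + 1) := by
          rw [← Gamma_add_one hpos.ne']; push_cast; ring_nf

theorem Real.tendsto_pow_div_Gamma_add_nat (c ν : ℝ) :
    Tendsto (fun n : ℕ => c ^ n / Gamma (ν + n + 1)) atTop (𝓝 0) := by
  obtain ⟨K, hK⟩ : ∃ K : ℕ, 0 ≤ ν + K := ⟨⌈-ν⌉₊, by linarith [le_ceil (-ν)]⟩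
  rw [← tendsto_add_atTop_iff_nat K]
  refine squeeze_zero_norm (fun n => ?_) (by
    simpa using (FloorSemiring.tendsto_pow_div_factorial_atTop |c|).const_mul
      (|c| ^ K / Gamma (ν + K + 1)))
  have hle := factorial_mul_Gamma_le_Gamma_add_nat hK n
  rw [show ν + K + n + 1 = ν + ↑(n + K) + 1 by push_cast; ring] at hle
  have hΓn : 0 < (n ! : ℝ) * Gamma (ν + K + 1) := by positivity
  rw [norm_div, norm_pow, norm_eq_abs, norm_of_nonneg (hΓn.trans_le hle).le]
  calc |c| ^ (n + K) / Gamma (ν + ↑(n + K) + 1)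
      ≤ |c| ^ (n + K) / (n ! * Gamma (ν + K + 1)) := by gcongr
    _ = |c| ^ K / Gamma (ν + K + 1) * (|c| ^ n / n !) := by ring

noncomputable def reducedBesselI (ν t : ℝ) : ℝ :=
  ∑' k : ℕ, t ^ k / (k ! * Gamma (ν + k + 1))

theorem summable_reducedBesselI (ν t : ℝ) :
    Summable fun k : ℕ => t ^ k / (k ! * Gamma (ν + k + 1)) := by
  refine (Real.summable_pow_div_factorial |t|).of_norm_bounded_eventually_nat ?_
  filter_upwards [(tendsto_pow_div_Gamma_add_nat 1 ν).norm.eventually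
    (ge_mem_nhds (by norm_num : ‖(0 : ℝ)‖ < 1))] with k hk
  calc ‖t ^ k / (k ! * Gamma (ν + k + 1))‖
      = |t| ^ k / k ! * ‖1 ^ k / Gamma (ν + k + 1)‖ := by
        simp only [norm_div, norm_mul, norm_pow, one_pow, norm_one, norm_eq_abs, Nat.abs_cast]
        ring
    _ ≤ |t| ^ k / k ! := mul_le_of_le_one_right (by positivity) hk
theorem reducedBesselI_eq_add (ν t : ℝ) :
    reducedBesselI ν t = (ν + 1) * reducedBesselI (ν + 1) t + t * reducedBesselI (ν + 2) t := by
  set b : ℕ → ℝ := fun k => k * t ^ k / (k ! * Gamma (ν + k + 2))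
  have hb : ∀ k : ℕ, b (k + 1) = t * (t ^ k / (k ! * Gamma (ν + 2 + k + 1))) := fun k => by
    simp only [b]
    rw [show ν + ↑(k + 1) + 2 = ν + 2 + k + 1 by push_cast; ring]
    push_cast [factorial_succ]
    field_simp
    ring
  have hb_summable : Summable b :=
    (summable_nat_add_iff 1).1 <| by
      simpa only [hb] using (summable_reducedBesselI (ν + 2) t).mul_left t
  have hterm : ∀ k : ℕ, t ^ k / (k ! * Gamma (ν + k + 1)) =
      (ν + 1) * (t ^ k / (k ! * Gamma (ν + 1 + k + 1))) + b k := fun k => by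
    have := inv_Gamma_eq_self_mul_inv_Gamma_add_one (ν + k + 1)
    simp only [b, div_eq_mul_inv, mul_inv, this]
    ring_nf
  unfold reducedBesselI
  rw [tsum_congr hterm, ((summable_reducedBesselI (ν + 1) t).mul_left _).tsum_add hb_summable,
    tsum_mul_left, hb_summable.tsum_eq_zero_add, tsum_congr hb, tsum_mul_left]
  simp [b]

theorem reducedBesselI_pos {ν t : ℝ} (hν : -1 < ν) (ht : 0 ≤ t) : 0 < reducedBesselI ν t := by
  refine (summable_reducedBesselI ν t).tsum_pos (fun k => ?_) 0
    (by simpa using Gamma_pos_of_pos (by linarith))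
  have : 0 < Gamma (ν + k + 1) := Gamma_pos_of_pos (by linarith [k.cast_nonneg (α := ℝ)])
  exact div_nonneg (pow_nonneg ht k) (mul_nonneg (by positivity) this.le)

theorem reducedBesselI_le_exp_div_Gamma {ν t : ℝ} (hν : 0 ≤ ν) (ht : 0 ≤ t) :
    reducedBesselI ν t ≤ exp t / Gamma (ν + 1) := by
  rw [exp_eq_exp_ℝ, NormedSpace.exp_eq_tsum_div, ← tsum_div_const]
  refine (summable_reducedBesselI ν t).tsum_le_tsum (fun k => ?_)
    ((Real.summable_pow_div_factorial t).div_const _)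
  have hΓ : 0 < Gamma (ν + 1) := Gamma_pos_of_pos (by linarith)
  rw [div_div]
  gcongr
  calc Gamma (ν + 1) ≤ k ! * Gamma (ν + 1) :=
        le_mul_of_one_le_left hΓ.le (by exact_mod_cast k.factorial_pos)
    _ ≤ Gamma (ν + k + 1) := factorial_mul_Gamma_le_Gamma_add_nat hν k

theorem tendsto_pow_mul_reducedBesselI_add_nat (c ν : ℝ) {t : ℝ} (ht : 0 ≤ t) :
    Tendsto (fun n : ℕ => c ^ n * reducedBesselI (ν + n) t) atTop (𝓝 0) := by
  refine squeeze_zero_norm' ?_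
    (by simpa using (tendsto_pow_div_Gamma_add_nat |c| ν).const_mul (exp t))
  filter_upwards [eventually_ge_atTop ⌈-ν⌉₊] with n hn
  have hνn : 0 ≤ ν + n := by linarith [(le_ceil (-ν)).trans (cast_le.2 hn)]
  rw [norm_mul, norm_pow, norm_eq_abs, norm_of_nonneg (reducedBesselI_pos (by linarith) ht).le]
  calc |c| ^ n * reducedBesselI (ν + n) t ≤ |c| ^ n * (exp t / Gamma (ν + n + 1)) := by
        gcongr; exact reducedBesselI_le_exp_div_Gamma hνn ht
    _ = exp t * (|c| ^ n / Gamma (ν + n + 1)) := by ring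

theorem exists_int_pow_mul_eq_int_mul_of_recurrence {s t : ℚ} (ht : t ≠ 0) {g : ℕ → ℝ}
    (hg : ∀ n : ℕ, g n = (s + n + 1) * g (n + 1) + t * g (n + 2)) {a b : ℤ} {h : ℝ}
    (h0 : g 0 = a * h) (h1 : g 1 = b * h) (n : ℕ) :
    ∃ z : ℤ, ((t.num * s.den : ℤ) : ℝ) ^ n * g n = z * h := by
  induction n using Nat.twoStepInduction with
  | zero => exact ⟨a, by simp [h0]⟩
  | one => exact ⟨t.num * s.den * b, by push_cast [h1]; ring⟩
  | more n ih₀ ih₁ =>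
    obtain ⟨z₀, hz₀⟩ := ih₀
    obtain ⟨z₁, hz₁⟩ := ih₁
    refine ⟨t.den * (t.num * s.den ^ 2 * z₀ - (s.num + (n + 1) * s.den) * z₁), ?_⟩
    have htR : (t : ℝ) ≠ 0 := by exact_mod_cast ht
    have htnum : (t.num : ℝ) = t.den * t := by exact_mod_cast (Rat.den_mul_eq_num t).symm
    have hsnum : (s.num : ℝ) = s.den * s := by exact_mod_cast (Rat.den_mul_eq_num s).symm
    apply mul_left_cancel₀ htR
    push_cast at hz₀ hz₁ ⊢
    simp only [htnum, hsnum] at hz₀ hz₁ ⊢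
    set m : ℝ := t.den * t * s.den
    linear_combination m ^ 2 * hz₀ - m * (s + n + 1) * hz₁ - m ^ (n + 2) * hg n

theorem reducedBesselI_add_one_ne_int_mul {s t : ℚ} (ht : 0 < t) {a b : ℤ} {h : ℝ}
    (h0 : reducedBesselI s t = a * h) : reducedBesselI (s + 1) t ≠ b * h := by
  intro h1
  set g : ℕ → ℝ := fun n => reducedBesselI (s + n) t
  have hg : ∀ n : ℕ, g n = (s + n + 1) * g (n + 1) + t * g (n + 2) := fun n => by
    simpa only [g, Nat.cast_add, Nat.cast_one, Nat.cast_ofNat, ← add_assoc]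
      using reducedBesselI_eq_add (s + n) t
  set M : ℤ := t.num * s.den
  have hM : (M : ℝ) ≠ 0 := by positivity
  choose z hz using exists_int_pow_mul_eq_int_mul_of_recurrence ht.ne' hg
    (by simpa [g] using h0) (by simpa [g] using h1)
  obtain ⟨K, hK⟩ : ∃ K : ℕ, 0 ≤ (s : ℝ) + K := ⟨⌈-(s : ℝ)⌉₊, by linarith [le_ceil (-(s : ℝ))]⟩
  have hg_pos : ∀ n ≥ K, 0 < g n := fun n hn =>
    reducedBesselI_pos (by linarith [(cast_le (α := ℝ)).2 hn]) (by positivity)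
  have h_le : ∀ n ≥ K, |h| ≤ |(M : ℝ)| ^ n * g n := fun n hn => by
    have hzh : (z n : ℝ) * h ≠ 0 := by
      rw [← hz n]; exact mul_ne_zero (pow_ne_zero n hM) (hg_pos n hn).ne'
    have hz1 : (1 : ℝ) ≤ |(z n : ℝ)| := by
      exact_mod_cast Int.one_le_abs (by exact_mod_cast left_ne_zero_of_mul hzh)
    calc |h| ≤ |(z n : ℝ)| * |h| := le_mul_of_one_le_left (abs_nonneg h) hz1
      _ = |(M : ℝ)| ^ n * g n := by
        rw [← abs_mul, ← hz n, abs_mul, abs_pow, abs_of_pos (hg_pos n hn)]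
  have h_zero : h = 0 := abs_nonpos_iff.1 <|
    ge_of_tendsto (tendsto_pow_mul_reducedBesselI_add_nat |(M : ℝ)| s (by positivity))
      (eventually_atTop.2 ⟨K, h_le⟩)
  have := hz K
  rw [h_zero, mul_zero] at this
  exact mul_ne_zero (pow_ne_zero K hM) (hg_pos K le_rfl).ne' this

theorem reducedBesselI_ratCast_ne_zero {s t : ℚ} (ht : 0 < t) :
    reducedBesselI s t ≠ 0 := fun h0 =>
  reducedBesselI_add_one_ne_int_mul (s := s) ht (a := 0) (b := 1) (h := reducedBesselI (s + 1) t)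
    (by simp [h0]) (by simp)

theorem irrational_reducedBesselI_add_one_div {s t : ℚ} (ht : 0 < t) :
    Irrational (reducedBesselI (s + 1) t / reducedBesselI s t) := by
  rintro ⟨w, hw⟩
  have hs := reducedBesselI_ratCast_ne_zero (s := s) ht
  have hden : (w.den : ℝ) ≠ 0 := by positivity
  refine reducedBesselI_add_one_ne_int_mul ht (a := w.den) (b := w.num)
    (h := reducedBesselI s t / w.den) (by push_cast; field_simp) ?_
  rw [eq_div_iff hs] at hw
  rw [← hw, Rat.cast_def]
  field_simp

theorem besselI_eq_rpow_mul_reducedBesselI (ν : ℝ) {r : ℝ} (hr : 0 < r) :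
    besselI ν r = (r / 2) ^ ν * reducedBesselI ν ((r / 2) ^ 2) := by
  rw [besselI, reducedBesselI, ← tsum_mul_left]
  refine tsum_congr fun k => ?_
  rw [rpow_add (by positivity), show 2 * (k : ℝ) = ((2 * k : ℕ) : ℝ) by push_cast; ring,
    rpow_natCast, pow_mul]
  ring

theorem besselI_ne_zero_and_ratio_irrational (s : ℚ) (r : ℝ) (hr : 0 < r)
    (hq : ∃ q : ℚ, r ^ 2 = (q : ℝ)) :
    besselI (s : ℝ) r ≠ 0 ∧ Irrational (r * besselI ((s : ℝ) + 1) r / besselI (s : ℝ) r) := by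
  obtain ⟨q, hq⟩ := hq
  set t : ℚ := q / 4
  have ht : ((t : ℚ) : ℝ) = (r / 2) ^ 2 := by push_cast [t, ← hq]; ring
  have ht_pos : 0 < t := by exact_mod_cast ht ▸ (by positivity : (0 : ℝ) < (r / 2) ^ 2)
  have hpow : 0 < (r / 2) ^ (s : ℝ) := by positivity
  rw [besselI_eq_rpow_mul_reducedBesselI _ hr, besselI_eq_rpow_mul_reducedBesselI _ hr, ← ht]
  have hs := reducedBesselI_ratCast_ne_zero (s := s) ht_pos
  refine ⟨mul_ne_zero hpow.ne' hs, ?_⟩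
  have hratio : r * ((r / 2) ^ ((s : ℝ) + 1) * reducedBesselI (s + 1) t) /
      ((r / 2) ^ (s : ℝ) * reducedBesselI s t) =
      ((2 * t : ℚ) : ℝ) * (reducedBesselI (s + 1) t / reducedBesselI s t) := by
    rw [rpow_add_one (by positivity)]
    push_cast [t, ← hq]
    field_simp
    ring
  rw [hratio]
  exact (irrational_reducedBesselI_add_one_div ht_pos).ratCast_mul (by positivity)
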